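/- arXiv:1808.02352 — 2 statements merged into one kernel-verified Lean document; each statement's English description precedes it below -/
import Mathlib

section
/- Let k, d, n be positive integers with d < n. For every family 𝒜 of subsets of [n] with VC(△𝒜^k) ≤ d, there exists a family ℱ of subsets of [n] which is k-wise (n−d)-union and satisfies |ℱ| = |𝒜|. Consequently |𝒜| ≤ p(n,k,d), the maximum size of a k-wise (n−d)-union family on [n]. -/
/-- A set `Y` is shattered by the family `F` if every subset of `Y`
is the trace of some member of `F` on `Y`. -/
def Shatters {α : Type*} [DecidableEq α] (F : Finset (Finset α)) (Y : Finset α) : Prop :=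
  ∀ T ⊆ Y, ∃ S ∈ F, S ∩ Y = T

/-- The VC dimension of a family: the largest cardinality of a shattered set. -/
noncomputable def vcDim {α : Type*} [DecidableEq α] (F : Finset (Finset α)) : ℕ :=
  sSup {m | ∃ Y : Finset α, Shatters F Y ∧ Y.card = m}

/-- `S₁ △ S₂ △ ⋯ △ S_k` for a `k`-tuple of sets. -/
def symmDiffAll {α : Type*} [DecidableEq α] {k : ℕ} (f : Fin k → Finset α) : Finset α :=
  (List.ofFn f).foldr symmDiff ∅

/-- The `k`-fold symmetric difference family `△𝒜^k`. -/
def symmDiffFam {α : Type*} [DecidableEq α] (k : ℕ) (A : Finset (Finset α)) :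
    Finset (Finset α) :=
  (Fintype.piFinset fun _ : Fin k => A).image symmDiffAll

/-- The family `𝒜₁ △ ⋯ △ 𝒜ₖ`. -/
def symmDiffFamMulti {α : Type*} [DecidableEq α] {k : ℕ} (A : Fin k → Finset (Finset α)) :
    Finset (Finset α) :=
  (Fintype.piFinset A).image symmDiffAll

/-- A family is `k`-wise `(n-d)`-union if any `k` of its members have union of size `≤ d`. -/
def KwiseUnion {α : Type*} [DecidableEq α] (k d : ℕ) (A : Finset (Finset α)) : Prop :=
  ∀ f : Fin k → Finset α, (∀ i, f i ∈ A) → (Finset.univ.sup f).card ≤ d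

/-- The `i`-compression of a family. -/
def compress {α : Type*} [DecidableEq α] (i : α) (A : Finset (Finset α)) :
    Finset (Finset α) :=
  A.image fun S => if S ∈ A ∧ S.erase i ∈ A then S else S.erase i

/-- The `(i,j)`-shift of a family. -/
def shiftIJ {α : Type*} [DecidableEq α] (i j : α) (A : Finset (Finset α)) :
    Finset (Finset α) :=
  A.image fun S => if i ∉ S ∧ j ∈ S ∧ insert i (S.erase j) ∉ A then insert i (S.erase j) else S

/-- `p(n,k,d)`: the maximum size of a `k`-wise `(n-d)`-union family on `[n]`. -/
noncomputable def pMax (n k d : ℕ) : ℕ :=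
  sSup {m | ∃ F : Finset (Finset (Fin n)), KwiseUnion k d F ∧ F.card = m}

section AuxLemmas
open Finset
open scoped symmDiff

section Helpers
variable {α : Type*} [DecidableEq α]

lemma symmDiffAll_zero (f : Fin 0 → Finset α) : symmDiffAll f = ∅ := by
  simp [symmDiffAll]

lemma symmDiffAll_succ {k : ℕ} (f : Fin (k + 1) → Finset α) :
    symmDiffAll f = f 0 ∆ symmDiffAll (Fin.tail f) := by
  simp only [symmDiffAll, List.ofFn_succ, List.foldr_cons]
  rfl

lemma symmDiffAll_cons {k : ℕ} (s : Finset α) (f : Fin k → Finset α) :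
    symmDiffAll (Fin.cons s f) = s ∆ symmDiffAll f := by
  rw [symmDiffAll_succ]
  simp [Fin.tail_cons]

lemma mem_symmDiffFam {k : ℕ} {A : Finset (Finset α)} {X : Finset α} :
    X ∈ symmDiffFam k A ↔ ∃ f : Fin k → Finset α, (∀ j, f j ∈ A) ∧ symmDiffAll f = X := by
  simp [symmDiffFam, Fintype.mem_piFinset]

lemma exists_mem_of_mem_symmDiffAll {a : α} : ∀ {k : ℕ} (f : Fin k → Finset α),
    a ∈ symmDiffAll f → ∃ j, a ∈ f j := by
  intro k
  induction k with
  | zero => intro f h; rw [symmDiffAll_zero] at h; exact absurd h (notMem_empty a)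
  | succ k ih =>
    intro f h
    rw [symmDiffAll_succ, Finset.mem_symmDiff] at h
    rcases h with ⟨h, -⟩ | ⟨h, -⟩
    · exact ⟨0, h⟩
    · obtain ⟨j, hj⟩ := ih _ h
      exact ⟨j.succ, hj⟩

lemma inter_symmDiff_distrib (s t Y : Finset α) : (s ∆ t) ∩ Y = (s ∩ Y) ∆ (t ∩ Y) := by
  ext a
  simp only [Finset.mem_symmDiff, Finset.mem_inter]
  tauto

lemma symmDiffAll_inter : ∀ {k : ℕ} (f : Fin k → Finset α) (Y : Finset α),
    symmDiffAll f ∩ Y = symmDiffAll (fun j => f j ∩ Y) := by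
  intro k
  induction k with
  | zero => intro f Y; simp [symmDiffAll_zero]
  | succ k ih =>
    intro f Y
    rw [symmDiffAll_succ f, symmDiffAll_succ (fun j => f j ∩ Y), inter_symmDiff_distrib, ih]
    rfl

lemma symmDiffAll_update : ∀ {k : ℕ} (f : Fin k → Finset α) (j : Fin k) (s : Finset α),
    symmDiffAll (Function.update f j s) = (s ∆ f j) ∆ symmDiffAll f := by
  intro k
  induction k with
  | zero => intro f j; exact j.elim0
  | succ k ih =>
    intro f j s
    induction j using Fin.cases with
    | zero =>
      rw [symmDiffAll_succ (Function.update f 0 s), Function.update_self,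
        Fin.tail_update_zero, symmDiffAll_succ f, symmDiff_assoc,
        symmDiff_symmDiff_cancel_left]
    | succ j =>
      rw [symmDiffAll_succ (Function.update f j.succ s), Fin.tail_update_succ,
        ih _ j s, Function.update_of_ne (Fin.succ_ne_zero j).symm, symmDiffAll_succ f,
        symmDiff_left_comm]
      rfl

end Helpers

section Compress
variable {α : Type*} [DecidableEq α]

lemma mem_compress {i : α} {A : Finset (Finset α)} {s : Finset α} :
    s ∈ compress i A ↔ (s ∈ A ∧ s.erase i ∈ A) ∨ (s ∉ A ∧ insert i s ∈ A) := by
  constructor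
  · intro h
    rw [compress, Finset.mem_image] at h
    obtain ⟨S, hS, hSs⟩ := h
    by_cases hc : S ∈ A ∧ S.erase i ∈ A
    · rw [if_pos hc] at hSs
      subst hSs
      exact Or.inl hc
    · rw [if_neg hc] at hSs
      subst hSs
      have hSe : S.erase i ∉ A := fun h' => hc ⟨hS, h'⟩
      by_cases hiS : i ∈ S
      · refine Or.inr ⟨hSe, ?_⟩
        rwa [Finset.insert_erase hiS]
      · rw [Finset.erase_eq_of_notMem hiS]
        rw [Finset.erase_eq_of_notMem hiS] at hSe
        exact absurd hS hSe
  · rintro (⟨h1, h2⟩ | ⟨h1, h2⟩)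
    · rw [compress, Finset.mem_image]
      exact ⟨s, h1, if_pos ⟨h1, h2⟩⟩
    · rw [compress, Finset.mem_image]
      refine ⟨insert i s, h2, ?_⟩
      have his : i ∉ s := fun h => h1 (by rwa [Finset.insert_eq_self.2 h] at h2)
      rw [Finset.erase_insert_eq_erase, Finset.erase_eq_of_notMem his, if_neg ?_]
      exact fun hc => h1 hc.2

lemma compress_card (i : α) (A : Finset (Finset α)) : (compress i A).card = A.card := by
  have : compress i A = Down.compression i A := by
    ext s
    rw [mem_compress, Down.mem_compression]
  rw [this, Down.card_compression]

/-- `B` is `i`-compressed. -/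
def IsComp (i : α) (B : Finset (Finset α)) : Prop := ∀ S ∈ B, S.erase i ∈ B

lemma isComp_compress (i : α) (A : Finset (Finset α)) : IsComp i (compress i A) := by
  intro S hS
  rcases mem_compress.1 hS with ⟨h1, h2⟩ | ⟨h1, h2⟩
  · exact mem_compress.2 (Or.inl ⟨h2, by rwa [Finset.erase_idem]⟩)
  · have hiS : i ∉ S := fun h => h1 (by rwa [Finset.insert_eq_self.2 h] at h2)
    rwa [Finset.erase_eq_of_notMem hiS]

lemma isComp_compress_of_isComp {i j : α} {B : Finset (Finset α)} (h : IsComp i B) :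
    IsComp i (compress j B) := by
  intro s hs
  rcases mem_compress.1 hs with ⟨h1, h2⟩ | ⟨h1, h2⟩
  · refine mem_compress.2 (Or.inl ⟨h s h1, ?_⟩)
    rw [Finset.erase_right_comm]
    exact h _ h2
  · -- s ∉ B, insert j s ∈ B
    have hjs : j ∉ s := fun hj => h1 (by rwa [Finset.insert_eq_self.2 hj] at h2)
    by_cases hij : i = j
    · subst hij
      have := h _ h2
      rw [Finset.erase_insert_eq_erase] at this
      exact mem_compress.2 (Or.inl ⟨this, by rwa [Finset.erase_idem]⟩)
    · have hI : insert j (s.erase i) ∈ B := by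
        have := h _ h2
        rwa [Finset.erase_insert_of_ne (fun hji => hij hji.symm)] at this
      by_cases hU : s.erase i ∈ B
      · refine mem_compress.2 (Or.inl ⟨hU, ?_⟩)
        rwa [Finset.erase_eq_of_notMem (fun hj => hjs (Finset.mem_of_mem_erase hj))]
      · exact mem_compress.2 (Or.inr ⟨hU, hI⟩)

end Compress

section Shat
variable {α : Type*} [DecidableEq α]

lemma mem_and_erase_of_mem_compress {i : α} {A : Finset (Finset α)} {s : Finset α}
    (hs : s ∈ compress i A) (hi : i ∈ s) : s ∈ A ∧ s.erase i ∈ A := by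
  rcases mem_compress.1 hs with h | ⟨h1, h2⟩
  · exact h
  · exact absurd (by rwa [Finset.insert_eq_self.2 hi] at h2) h1

lemma shatters_compress {k : ℕ} {i : α} {A : Finset (Finset α)} {Y : Finset α}
    (h : _root_.Shatters (symmDiffFam k (compress i A)) Y) : _root_.Shatters (symmDiffFam k A) Y := by
  -- the "lift to A" map
  classical
  set g0 : (Fin k → Finset α) → (Fin k → Finset α) :=
    fun f j => if f j ∈ A then f j else insert i (f j) with hg0
  have hg0A : ∀ f : Fin k → Finset α, (∀ j, f j ∈ compress i A) → ∀ j, g0 f j ∈ A := by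
    intro f hf j
    by_cases hj : f j ∈ A
    · simpa [g0, hj]
    · rcases mem_compress.1 (hf j) with h' | h'
      · exact absurd h'.1 hj
      · simpa [g0, hj] using h'.2
  have hg0off : ∀ (f : Fin k → Finset α) (Z : Finset α), i ∉ Z →
      ∀ j, g0 f j ∩ Z = f j ∩ Z := by
    intro f Z hiZ j
    by_cases hj : f j ∈ A
    · simp [g0, hj]
    · simp [g0, hj, Finset.insert_inter_of_notMem hiZ]
  by_cases hiY : i ∈ Y
  · intro T hT
    obtain ⟨X, hX, hXY⟩ := h (insert i T) (Finset.insert_subset hiY hT)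
    obtain ⟨f, hf, rfl⟩ := mem_symmDiffFam.1 hX
    have hiX : i ∈ symmDiffAll f := by
      have : i ∈ symmDiffAll f ∩ Y := hXY ▸ Finset.mem_insert_self i T
      exact (Finset.mem_inter.1 this).1
    obtain ⟨j₀, hj₀⟩ := exists_mem_of_mem_symmDiffAll f hiX
    obtain ⟨hj₀A, hj₀eA⟩ := mem_and_erase_of_mem_compress (hf j₀) hj₀
    set g := g0 f with hg
    have hgA : ∀ j, g j ∈ A := hg0A f hf
    have hgj₀ : g j₀ = f j₀ := by simp [g, g0, hj₀A]
    set g' := Function.update g j₀ ((f j₀).erase i) with hg'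
    have hg'A : ∀ j, g' j ∈ A := by
      intro j
      by_cases hj : j = j₀
      · subst hj; simpa [g'] using hj₀eA
      · simpa [g', Function.update_of_ne hj] using hgA j
    have hgg' : symmDiffAll g' = {i} ∆ symmDiffAll g := by
      rw [hg', symmDiffAll_update, hgj₀]
      congr 1
      ext a
      by_cases ha : a = i
      · subst ha
        simp [Finset.mem_symmDiff, hj₀]
      · simp [Finset.mem_symmDiff, Finset.mem_erase, ha]
    have hi' : i ∈ symmDiffAll g' ↔ i ∉ symmDiffAll g := by
      rw [hgg', Finset.mem_symmDiff]
      simp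
    -- common trace computation
    have key : ∀ h : Fin k → Finset α, (∀ j, h j ∈ A) →
        (∀ j, h j ∩ Y.erase i = f j ∩ Y.erase i) →
        (i ∈ symmDiffAll h ↔ i ∈ T) → ∃ S ∈ symmDiffFam k A, S ∩ Y = T := by
      intro h hh hY hiT
      refine ⟨symmDiffAll h, mem_symmDiffFam.2 ⟨h, hh, rfl⟩, ?_⟩
      have hoff : symmDiffAll h ∩ Y.erase i = symmDiffAll f ∩ Y.erase i := by
        rw [symmDiffAll_inter, symmDiffAll_inter, funext hY]
      ext a
      by_cases ha : a = i
      · subst ha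
        simp only [Finset.mem_inter, hiY, and_true]
        exact hiT
      · have h1 : a ∈ symmDiffAll h ∩ Y ↔ a ∈ symmDiffAll h ∩ Y.erase i := by
          simp [Finset.mem_inter, Finset.mem_erase, ha]
        have h2 : a ∈ symmDiffAll f ∩ Y.erase i ↔ a ∈ symmDiffAll f ∩ Y := by
          simp [Finset.mem_inter, Finset.mem_erase, ha]
        rw [h1, hoff, h2, hXY]
        simp [Finset.mem_insert, ha]
    by_cases hcase : i ∈ symmDiffAll g ↔ i ∈ T
    · exact key g hgA (fun j => hg0off f (Y.erase i) (Finset.notMem_erase i Y) j) hcase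
    · refine key g' hg'A ?_ ?_
      · intro j
        by_cases hj : j = j₀
        · subst hj
          have : g' j = (f j).erase i := by simp [g']
          rw [this]
          ext a
          simp only [Finset.mem_inter, Finset.mem_erase]
          constructor
          · rintro ⟨⟨-, ha⟩, hb⟩; exact ⟨ha, hb⟩
          · rintro ⟨ha, hb, hc⟩; exact ⟨⟨hb, ha⟩, hb, hc⟩
        · rw [show g' j = g j by simp [g', Function.update_of_ne hj]]
          exact hg0off f (Y.erase i) (Finset.notMem_erase i Y) j
      · rw [hi']
        tauto
  · -- i ∉ Y
    intro T hT
    obtain ⟨X, hX, hXY⟩ := h T hT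
    obtain ⟨f, hf, rfl⟩ := mem_symmDiffFam.1 hX
    refine ⟨symmDiffAll (g0 f), mem_symmDiffFam.2 ⟨g0 f, hg0A f hf, rfl⟩, ?_⟩
    rw [symmDiffAll_inter, funext (hg0off f Y hiY), ← symmDiffAll_inter]
    exact hXY

end Shat

section Final
variable {α : Type*} [DecidableEq α]

lemma foldr_compress_card (l : List α) (A : Finset (Finset α)) :
    (l.foldr compress A).card = A.card := by
  induction l with
  | nil => rfl
  | cons i l ih => rw [List.foldr_cons, compress_card, ih]

lemma foldr_compress_shatters {k : ℕ} (l : List α) (A : Finset (Finset α)) (Y : Finset α)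
    (h : _root_.Shatters (symmDiffFam k (l.foldr compress A)) Y) :
    _root_.Shatters (symmDiffFam k A) Y := by
  induction l with
  | nil => exact h
  | cons i l ih => exact ih (shatters_compress h)

lemma foldr_compress_isComp (l : List α) (A : Finset (Finset α)) :
    ∀ i ∈ l, IsComp i (l.foldr compress A) := by
  induction l with
  | nil => simp
  | cons j l ih =>
    intro i hi
    rcases List.mem_cons.1 hi with rfl | hi
    · exact isComp_compress i _
    · exact isComp_compress_of_isComp (ih i hi)

lemma down_of_isComp {B : Finset (Finset α)} (h : ∀ i : α, IsComp i B) :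
    ∀ T ∈ B, ∀ S ⊆ T, S ∈ B := by
  suffices H : ∀ (m : ℕ) (T : Finset α), T ∈ B → ∀ S ⊆ T, (T \ S).card = m → S ∈ B by
    exact fun T hT S hS => H _ T hT S hS rfl
  intro m
  induction m with
  | zero =>
    intro T hT S hS h0
    have : T ⊆ S := Finset.sdiff_eq_empty_iff_subset.1 (Finset.card_eq_zero.1 h0)
    rwa [Finset.Subset.antisymm hS this]
  | succ m ih =>
    intro T hT S hS hc
    have hne : (T \ S).Nonempty := Finset.card_pos.1 (by omega)
    obtain ⟨i, hi⟩ := hne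
    have hiT : i ∈ T := (Finset.mem_sdiff.1 hi).1
    have hiS : i ∉ S := (Finset.mem_sdiff.1 hi).2
    refine ih (T.erase i) (h i T hT) S ?_ ?_
    · intro a ha
      exact Finset.mem_erase.2 ⟨fun h' => hiS (h' ▸ ha), hS ha⟩
    · have : T.erase i \ S = (T \ S).erase i := by
        ext a
        simp only [Finset.mem_sdiff, Finset.mem_erase]
        tauto
      rw [this, Finset.card_erase_of_mem hi, hc]
      omega

lemma mem_symmDiffFam_of_subset_sup {B : Finset (Finset α)}
    (hdown : ∀ T ∈ B, ∀ S ⊆ T, S ∈ B) :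
    ∀ {k : ℕ} (f : Fin k → Finset α), (∀ j, f j ∈ B) →
      ∀ T ⊆ Finset.univ.sup f, T ∈ symmDiffFam k B := by
  intro k
  induction k with
  | zero =>
    intro f hf T hT
    have hT0 : T = ∅ := Finset.subset_empty.1 (by simpa using hT)
    exact mem_symmDiffFam.2 ⟨f, hf, by rw [symmDiffAll_zero, hT0]⟩
  | succ k ih =>
    intro f hf T hT
    set T₀ := T ∩ f 0 with hT₀
    set T₁ := T \ f 0 with hT₁
    have hT₀B : T₀ ∈ B := hdown (f 0) (hf 0) T₀ Finset.inter_subset_right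
    have hT₁sub : T₁ ⊆ Finset.univ.sup (Fin.tail f) := by
      intro a ha
      have haT : a ∈ T := (Finset.mem_sdiff.1 ha).1
      have haf : a ∉ f 0 := (Finset.mem_sdiff.1 ha).2
      have := hT haT
      rw [Finset.mem_sup] at this ⊢
      obtain ⟨j, -, hj⟩ := this
      induction j using Fin.cases with
      | zero => exact absurd hj haf
      | succ j => exact ⟨j, Finset.mem_univ j, hj⟩
    obtain ⟨g, hg, hgT⟩ := mem_symmDiffFam.1
      (ih (Fin.tail f) (fun j => hf j.succ) T₁ hT₁sub)
    refine mem_symmDiffFam.2 ⟨Fin.cons T₀ g, ?_, ?_⟩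
    · intro j
      induction j using Fin.cases with
      | zero => simpa using hT₀B
      | succ j => simpa using hg j
    · rw [symmDiffAll_cons, hgT]
      ext a
      simp only [Finset.mem_symmDiff, hT₀, hT₁, Finset.mem_inter, Finset.mem_sdiff]
      by_cases ha : a ∈ f 0 <;> by_cases haT : a ∈ T <;> simp [ha, haT]

lemma card_le_of_shatters {n d : ℕ} {F : Finset (Finset (Fin n))}
    (hVC : _root_.vcDim F ≤ d) {Y : Finset (Fin n)} (hY : _root_.Shatters F Y) : Y.card ≤ d := by
  refine le_trans (le_trans (le_csSup ?_ ?_) le_rfl) hVC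
  · refine ⟨n, ?_⟩
    rintro m ⟨Y', -, rfl⟩
    calc Y'.card ≤ (Finset.univ : Finset (Fin n)).card := Finset.card_le_univ Y'
    _ = n := by simp
  · exact ⟨Y, hY, rfl⟩

end Final

end AuxLemmas

/-- if `VC(△𝒜^k) ≤ d` then there is a `k`-wise `(n−d)`-union family of the
same size as `𝒜`; consequently `|𝒜| ≤ p(n,k,d)`. -/
theorem statement4 (k d n : ℕ) (hk : 0 < k) (hd : 0 < d) (hdn : d < n)
    (A : Finset (Finset (Fin n))) (hVC : vcDim (symmDiffFam k A) ≤ d) :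
    (∃ F : Finset (Finset (Fin n)), KwiseUnion k d F ∧ F.card = A.card) ∧
      A.card ≤ pMax n k d := by
  classical
  set B := (List.finRange n).foldr compress A with hB
  have hcard : B.card = A.card := foldr_compress_card _ _
  have hdown : ∀ T ∈ B, ∀ S ⊆ T, S ∈ B :=
    down_of_isComp (fun i => foldr_compress_isComp _ _ i (List.mem_finRange i))
  have hK : KwiseUnion k d B := by
    intro f hf
    have hsh : _root_.Shatters (symmDiffFam k B) (Finset.univ.sup f) := by
      intro T hT
      exact ⟨T, mem_symmDiffFam_of_subset_sup hdown f hf T hT,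
        Finset.inter_eq_left.2 hT⟩
    exact card_le_of_shatters hVC (foldr_compress_shatters _ _ _ hsh)
  refine ⟨⟨B, hK, hcard⟩, ?_⟩
  refine le_csSup ?_ ⟨B, hK, hcard⟩
  refine ⟨Fintype.card (Finset (Fin n)), ?_⟩
  rintro m ⟨F, -, rfl⟩
  calc F.card ≤ (Finset.univ : Finset (Finset (Fin n))).card := Finset.card_le_univ F
  _ = _ := Finset.card_univ
end

section
/- Let k, d be positive integers and write d ≡ r (mod k) with 0 ≤ r ≤ k−1. There exists n₀ = n₀(d,k) such that for every n ≥ n₀, every k-wise (n−d)-union family 𝒜 of subsets of [n] satisfies |𝒜| ≤ 2^r · Σ_{i=0}^{⌊d/k⌋} C(n−r, i). -/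
/-!
Write `d = k q + r`. Choosing `k - 1` members of `𝒜` greedily, each adding as many new points as
possible, gives a set `W` with `|W| ≤ d` outside of which every member has at most `q` points.
Call `T ⊆ W` a full trace if more than `(k - 1) q` pairwise disjoint `q`-sets outside `W` complete
it to members of `𝒜`. Any `k` full traces can then be completed by pairwise disjoint tails, so
`k` full traces cover at most `r` points, and the union `R` of all full traces has `|R| ≤ r`.

Members whose trace on `W` is not full are few: for a fixed trace their tails contain no matching
of size `(k - 1) q + 1`, so there are `O(n^(q-1))` of them, eventually less than `C(n - r, q)`.
Members with a full trace have at most `q` points outside `R`, so there are at most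
`2^|R| · C(n - |R|, ≤ q)` of them. If `|R| < r`, Pascal's rule absorbs the error term:
`2^(r-1) C(n - r + 1, ≤ q) + C(n - r, q) ≤ 2^r C(n - r, ≤ q)`. If `|R| = r`, completing `k - 1`
full traces covering `R` together with any member `S` shows that `S` has at most `q` points
outside `R`, which gives the bound directly.
-/

open Finset

lemma sum_range_choose_succ (a q : ℕ) :
    ∑ i ∈ range (q + 1), (a + 1).choose i
      = ∑ i ∈ range (q + 1), a.choose i + ∑ i ∈ range q, a.choose i := by
  rw [sum_range_succ', sum_range_succ' a.choose]
  simp only [Nat.choose_succ_succ', sum_add_distrib, Nat.choose_zero_right]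
  ring

lemma sum_range_choose_succ_le (a q : ℕ) :
    ∑ i ∈ range (q + 1), (a + 1).choose i ≤ 2 * ∑ i ∈ range (q + 1), a.choose i := by
  rw [sum_range_choose_succ, two_mul]
  gcongr
  omega

lemma two_pow_mul_sum_choose_sub_mono {n a b : ℕ} (q : ℕ) (hab : a ≤ b) (hbn : b ≤ n) :
    2 ^ a * ∑ i ∈ range (q + 1), (n - a).choose i
      ≤ 2 ^ b * ∑ i ∈ range (q + 1), (n - b).choose i := by
  induction b, hab using Nat.le_induction with
  | base => rfl
  | succ b hab ih =>
    calc 2 ^ a * ∑ i ∈ range (q + 1), (n - a).choose i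
        ≤ 2 ^ b * ∑ i ∈ range (q + 1), (n - (b + 1) + 1).choose i := by
          rw [show n - (b + 1) + 1 = n - b by omega]; exact ih (by omega)
      _ ≤ 2 ^ b * (2 * ∑ i ∈ range (q + 1), (n - (b + 1)).choose i) := by
          gcongr; exact sum_range_choose_succ_le _ _
      _ = 2 ^ (b + 1) * ∑ i ∈ range (q + 1), (n - (b + 1)).choose i := by ring

lemma two_pow_mul_sum_choose_succ_add_choose_le (s a q : ℕ) :
    2 ^ s * ∑ i ∈ range (q + 1), (a + 1).choose i + a.choose q
      ≤ 2 ^ (s + 1) * ∑ i ∈ range (q + 1), a.choose i := by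
  have h : a.choose q ≤ 2 ^ s * a.choose q := Nat.le_mul_of_pos_left _ (by positivity)
  rw [sum_range_choose_succ, sum_range_succ a.choose q, pow_succ]
  nlinarith

lemma exists_mul_pow_le_choose_sub (K r : ℕ) {q : ℕ} (hq : 0 < q) :
    ∃ n₀, ∀ n, n₀ ≤ n → K * n ^ (q - 1) ≤ (n - r).choose q := by
  refine ⟨2 * (r + q) + 2 ^ q * q.factorial * K, fun n hn => ?_⟩
  set x := n - (r + q)
  have hnx : n ≤ 2 * x := by omega
  have hKx : q.factorial * K * 2 ^ (q - 1) ≤ x := by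
    have : q.factorial * K * 2 ^ (q - 1) ≤ 2 ^ q * q.factorial * K := by
      rw [mul_comm, mul_assoc]
      exact Nat.mul_le_mul_right _ (Nat.pow_le_pow_right two_pos (Nat.sub_le q 1))
    omega
  have hxq : x ^ q = x * x ^ (q - 1) := by rw [← pow_succ', Nat.sub_add_cancel hq]
  have key : q.factorial * (K * n ^ (q - 1)) ≤ q.factorial * (n - r).choose q :=
    calc q.factorial * (K * n ^ (q - 1)) ≤ q.factorial * (K * (2 * x) ^ (q - 1)) := by gcongr
      _ = q.factorial * K * 2 ^ (q - 1) * x ^ (q - 1) := by ring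
      _ ≤ x ^ q := by rw [hxq]; gcongr
      _ ≤ (n - r + 1 - q) ^ q := Nat.pow_le_pow_left (by omega) q
      _ ≤ (n - r).descFactorial q := Nat.pow_sub_le_descFactorial _ _
      _ = q.factorial * (n - r).choose q := Nat.descFactorial_eq_factorial_mul_choose _ _
  exact Nat.le_of_mul_le_mul_left key q.factorial_pos

lemma Fin.sup_univ_cons {β : Type*} [SemilatticeSup β] [OrderBot β] {m : ℕ} (a : β)
    (f : Fin m → β) : univ.sup (Fin.cons a f : Fin (m + 1) → β) = a ⊔ univ.sup f := by
  rw [Fin.univ_succ, sup_cons, sup_map]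
  rfl

section

variable {α : Type*} [DecidableEq α]

lemma exists_fin_cover {P : Finset α → Prop} {R : Finset α} {m : ℕ} (hRm : R.card ≤ m)
    (hP : ∃ T, P T) (hR : ∀ x ∈ R, ∃ T, P T ∧ x ∈ T) :
    ∃ g : Fin m → Finset α, (∀ i, P (g i)) ∧ R ⊆ univ.sup g := by
  obtain ⟨T₀, hT₀⟩ := hP
  choose! T hT hxT using hR
  refine ⟨fun i => if h : (i : ℕ) < R.card then T (R.equivFin.symm ⟨i, h⟩) else T₀,
    fun i => ?_, fun x hx => ?_⟩
  · dsimp only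
    split_ifs
    exacts [hT _ (R.equivFin.symm _).2, hT₀]
  · refine mem_sup.2 ⟨Fin.castLE hRm (R.equivFin ⟨x, hx⟩), mem_univ _, ?_⟩
    simpa using hxT x hx

lemma card_le_of_forall_card_sdiff_le [Fintype α] {A : Finset (Finset α)} {R : Finset α} {q : ℕ}
    (h : ∀ S ∈ A, (S \ R).card ≤ q) :
    A.card ≤ 2 ^ R.card * ∑ i ∈ range (q + 1), (Fintype.card α - R.card).choose i := by
  calc A.card ≤ (R.powerset ×ˢ (range (q + 1)).biUnion fun i => powersetCard i Rᶜ).card := by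
        refine card_le_card_of_injOn (fun S => (S ∩ R, S \ R)) (fun S hS => ?_)
          (fun S _ S' _ hSS' => ?_)
        · simp only [coe_product, coe_biUnion, coe_range, Set.mem_prod, Set.mem_iUnion, mem_coe,
            mem_powerset, mem_powersetCard, inter_subset_right, true_and]
          exact ⟨(S \ R).card, Set.mem_Iio.2 (Nat.lt_succ_of_le (h S hS)),
            fun x hx => mem_compl.2 (mem_sdiff.1 hx).2, rfl⟩
        · simp only [Prod.mk.injEq] at hSS'
          rw [← sdiff_union_inter S R, ← sdiff_union_inter S' R, hSS'.1, hSS'.2]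
    _ ≤ 2 ^ R.card * ∑ i ∈ range (q + 1), (Fintype.card α - R.card).choose i := by
        rw [card_product, card_powerset]
        gcongr
        refine card_biUnion_le.trans (sum_le_sum fun i _ => ?_)
        rw [card_powersetCard, card_compl]

lemma exists_disjoint_of_card_lt {M : Finset (Finset α)}
    (hM : (M : Set (Finset α)).PairwiseDisjoint id) {B : Finset α} (hB : B.card < M.card) :
    ∃ Q ∈ M, Disjoint Q B := by
  by_contra! hmeet
  have : M.card ≤ B.card :=
    calc M.card = ∑ _Q ∈ M, 1 := card_eq_sum_ones M
      _ ≤ ∑ Q ∈ M, (Q ∩ B).card :=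
          sum_le_sum fun Q hQ => card_pos.2 (not_disjoint_iff_nonempty_inter.1 (hmeet Q hQ))
      _ = (M.biUnion (· ∩ B)).card := (card_biUnion (hM.mono fun _ => inter_subset_left)).symm
      _ ≤ B.card := card_le_card (biUnion_subset.2 fun _ _ => inter_subset_right)
  omega

lemma card_filter_mem_le [Fintype α] {F : Finset (Finset α)} {q : ℕ} (hF : ∀ Q ∈ F, Q.card = q)
    (x : α) :
    (F.filter (x ∈ ·)).card ≤ Fintype.card α ^ (q - 1) :=
  calc (F.filter (x ∈ ·)).card ≤ (powersetCard (q - 1) (univ : Finset α)).card := by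
        refine card_le_card_of_injOn (·.erase x) (fun Q hQ => ?_)
          ((erase_injOn' x).mono fun Q hQ => (mem_filter.1 hQ).2)
        rw [mem_coe, mem_filter] at hQ
        simp [card_erase_of_mem hQ.2, hF Q hQ.1]
    _ ≤ Fintype.card α ^ (q - 1) := by
        rw [card_powersetCard, card_univ]; exact Nat.choose_le_pow _ _

lemma card_le_of_forall_pairwiseDisjoint_card_le [Fintype α] {F : Finset (Finset α)} {c q : ℕ}
    (hq : 0 < q) (hF : ∀ Q ∈ F, Q.card = q)
    (hmatch : ∀ M ⊆ F, (M : Set (Finset α)).PairwiseDisjoint id → M.card ≤ c) :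
    F.card ≤ c * q * Fintype.card α ^ (q - 1) := by
  classical
  obtain ⟨M, hM, hmax⟩ := exists_max_image
    (F.powerset.filter fun M : Finset (Finset α) => (M : Set (Finset α)).PairwiseDisjoint id)
    card ⟨∅, by simp⟩
  rw [mem_filter, mem_powerset] at hM
  set C := M.biUnion id
  have hC : C.card ≤ c * q :=
    calc C.card ≤ ∑ Q ∈ M, Q.card := card_biUnion_le
      _ = M.card * q := sum_const_nat fun Q hQ => hF Q (hM.1 hQ)
      _ ≤ c * q := Nat.mul_le_mul_right q (hmatch M hM.1 hM.2)
  -- a maximal matching meets every member of `F`, since the members are nonempty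
  have hmeet : ∀ Q ∈ F, ∃ x ∈ C, x ∈ Q := by
    intro Q hQ
    by_contra! hQC
    have hQM : Q ∉ M := fun hQM => by
      obtain ⟨y, hy⟩ := card_pos.1 (hq.trans_eq (hF Q hQ).symm)
      exact hQC y (mem_biUnion.2 ⟨Q, hQM, hy⟩) hy
    have hins := hmax (insert Q M) <| mem_filter.2 ⟨mem_powerset.2 (insert_subset hQ hM.1), by
      rw [coe_insert]
      exact hM.2.insert fun P hP _ => disjoint_left.2 fun x hxQ hxP =>
        hQC x (mem_biUnion.2 ⟨P, hP, hxP⟩) hxQ⟩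
    rw [card_insert_of_notMem hQM] at hins
    omega
  calc F.card ≤ (C.biUnion fun x => F.filter (x ∈ ·)).card := card_le_card fun Q hQ => by
        obtain ⟨x, hxC, hxQ⟩ := hmeet Q hQ
        exact mem_biUnion.2 ⟨x, hxC, mem_filter.2 ⟨hQ, hxQ⟩⟩
    _ ≤ ∑ x ∈ C, (F.filter (x ∈ ·)).card := card_biUnion_le
    _ ≤ ∑ _x ∈ C, Fintype.card α ^ (q - 1) := sum_le_sum fun x _ => card_filter_mem_le hF x
    _ = C.card * Fintype.card α ^ (q - 1) := by rw [sum_const, smul_eq_mul]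
    _ ≤ c * q * Fintype.card α ^ (q - 1) := Nat.mul_le_mul_right _ hC

variable {A : Finset (Finset α)} {W : Finset α} {m d q r N : ℕ}

lemma KwiseUnion.card_union_sup_le (hA : KwiseUnion (m + 1) d A) {S : Finset α} (hS : S ∈ A)
    {f : Fin m → Finset α} (hf : ∀ i, f i ∈ A) : (S ∪ univ.sup f).card ≤ d := by
  simpa [Fin.sup_univ_cons] using hA (Fin.cons S f) (Fin.forall_fin_succ.2 ⟨hS, hf⟩)

lemma exists_mul_le_card_sup_forall_card_sdiff_le (hA : A.Nonempty) :
    ∀ j : ℕ, ∃ f : Fin j → Finset α, (∀ i, f i ∈ A) ∧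
      ∃ t, j * t ≤ (univ.sup f).card ∧ ∀ S ∈ A, (S \ univ.sup f).card ≤ t
  | 0 => ⟨Fin.elim0, fun i => i.elim0, A.sup card, by simp, fun S hS => by simpa using le_sup hS⟩
  | j + 1 => by
    obtain ⟨f, hf, t, hjt, ht⟩ := exists_mul_le_card_sup_forall_card_sdiff_le hA j
    set U := univ.sup f
    obtain ⟨S₀, hS₀, hmax⟩ := A.exists_max_image (fun S => (S \ U).card) hA
    refine ⟨Fin.cons S₀ f, Fin.forall_fin_succ.2 ⟨hS₀, hf⟩, (S₀ \ U).card, ?_, fun S hS => ?_⟩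
    · rw [Fin.sup_univ_cons, sup_eq_union, ← card_sdiff_add_card]
      have := Nat.mul_le_mul_left j (ht S₀ hS₀)
      linarith
    · rw [Fin.sup_univ_cons, sup_eq_union]
      exact (card_le_card (sdiff_subset_sdiff subset_rfl subset_union_right)).trans (hmax S hS)

lemma KwiseUnion.exists_card_le_forall_card_sdiff_le (hA : KwiseUnion (m + 1) d A) :
    ∃ W : Finset α, W.card ≤ d ∧ ∀ S ∈ A, (S \ W).card ≤ d / (m + 1) := by
  rcases A.eq_empty_or_nonempty with rfl | hne
  · exact ⟨∅, by simp⟩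
  obtain ⟨f, hf, t, hmt, ht⟩ := exists_mul_le_card_sup_forall_card_sdiff_le hne m
  have hunion : ∀ S ∈ A, (S \ univ.sup f).card + (univ.sup f).card ≤ d := fun S hS =>
    (card_sdiff_add_card _ _).trans_le (hA.card_union_sup_le hS hf)
  obtain ⟨S₀, hS₀⟩ := hne
  refine ⟨univ.sup f, (Nat.le_add_left _ _).trans (hunion S₀ hS₀), fun S hS => ?_⟩
  rw [Nat.le_div_iff_mul_le m.succ_pos]
  have := Nat.mul_le_mul_left m (ht S hS)
  linarith [hunion S hS]

def IsFullTrace (A : Finset (Finset α)) (W : Finset α) (N q : ℕ) (T : Finset α) : Prop :=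
  T ⊆ W ∧ ∃ M : Finset (Finset α), N < M.card ∧ (M : Set (Finset α)).PairwiseDisjoint id ∧
    ∀ Q ∈ M, Q.card = q ∧ Disjoint Q W ∧ T ∪ Q ∈ A

open Classical in
noncomputable def fullTraceSupport (A : Finset (Finset α)) (W : Finset α) (N q : ℕ) :
    Finset α :=
  W.filter fun x => ∃ T, IsFullTrace A W N q T ∧ x ∈ T

lemma mem_fullTraceSupport {x : α} :
    x ∈ fullTraceSupport A W N q ↔ x ∈ W ∧ ∃ T, IsFullTrace A W N q T ∧ x ∈ T := by
  simp only [fullTraceSupport, mem_filter]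

lemma IsFullTrace.subset_fullTraceSupport {T : Finset α} (hT : IsFullTrace A W N q T) :
    T ⊆ fullTraceSupport A W N q := fun _ hx =>
  mem_fullTraceSupport.2 ⟨hT.1 hx, T, hT, hx⟩

lemma exists_tails_of_isFullTrace {ι : Type*} [DecidableEq ι] (s : Finset ι) {g : ι → Finset α}
    (hg : ∀ i ∈ s, IsFullTrace A W N q (g i)) {B : Finset α} (hB : B.card + s.card * q ≤ N + q) :
    ∃ Q : ι → Finset α, (∀ i ∈ s, g i ∪ Q i ∈ A) ∧ Disjoint (s.biUnion Q) (W ∪ B) ∧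
      (s.biUnion Q).card = s.card * q := by
  induction s using Finset.induction_on with
  | empty => exact ⟨fun _ => ∅, by simp⟩
  | insert a s ha ih =>
    rw [card_insert_of_notMem ha] at hB
    obtain ⟨Q, hQA, hQW, hQcard⟩ :=
      ih (fun i hi => hg i (mem_insert_of_mem hi)) (by linarith)
    obtain ⟨-, M, hM, hMdisj, hMtails⟩ := hg a (mem_insert_self a s)
    obtain ⟨Qa, hQaM, hQa⟩ := exists_disjoint_of_card_lt hMdisj (B := s.biUnion Q ∪ B) <|
      (card_union_le _ _).trans_lt (by linarith)
    obtain ⟨hQa_card, hQa_W, hQa_A⟩ := hMtails Qa hQaM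
    have hne : ∀ i ∈ s, i ≠ a := fun i hi h => ha (h ▸ hi)
    have hbiUnion : (insert a s).biUnion (Function.update Q a Qa) = Qa ∪ s.biUnion Q := by
      rw [biUnion_insert, Function.update_self,
        biUnion_congr rfl fun i hi => Function.update_of_ne (hne i hi) Qa Q]
    refine ⟨Function.update Q a Qa, fun i hi => ?_, ?_, ?_⟩
    · rcases mem_insert.1 hi with rfl | hi
      · rwa [Function.update_self]
      · rw [Function.update_of_ne (hne i hi)]
        exact hQA i hi
    · rw [hbiUnion, disjoint_union_left]
      exact ⟨disjoint_union_right.2 ⟨hQa_W, hQa.mono_right subset_union_right⟩, hQW⟩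
    · rw [hbiUnion, card_union_of_disjoint (hQa.mono_right subset_union_left), hQa_card, hQcard,
        card_insert_of_notMem ha]
      ring

lemma KwiseUnion.card_union_sup_add_le (hA : KwiseUnion (m + 1) d A) {S : Finset α} (hS : S ∈ A)
    (hSW : (S \ W).card ≤ q) {g : Fin m → Finset α}
    (hg : ∀ i, IsFullTrace A W (m * q) q (g i)) : (S ∪ univ.sup g).card + m * q ≤ d := by
  obtain ⟨Q, hQA, hQdisj, hQcard⟩ :=
    exists_tails_of_isFullTrace univ (fun i _ => hg i) (B := S \ W)
      (by rw [card_univ, Fintype.card_fin]; omega)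
  rw [card_univ, Fintype.card_fin] at hQcard
  have hSg : S ∪ univ.sup g ⊆ W ∪ S \ W := by
    rw [union_sdiff_self_eq_union]
    exact union_subset subset_union_right <|
      Finset.sup_le fun i _ => (hg i).1.trans subset_union_left
  have h := hA.card_union_sup_le hS (fun i => hQA i (mem_univ i))
  rw [sup_eq_biUnion, biUnion_union, ← union_assoc, ← sup_eq_biUnion,
    card_union_of_disjoint (hQdisj.symm.mono_left hSg), hQcard] at h
  exact h

lemma KwiseUnion.card_fullTraceSupport_le (hA : KwiseUnion (m + 1) d A) (hd : (m + 1) * q + r = d)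
    (hr : r ≤ m) : (fullTraceSupport A W (m * q) q).card ≤ r := by
  set R := fullTraceSupport A W (m * q) q
  by_contra! hR
  obtain ⟨V, hVR, hV⟩ := exists_subset_card_eq (show r + 1 ≤ R.card by omega)
  obtain ⟨x₀, hx₀⟩ := card_pos.1 (by omega : 0 < V.card)
  have hcov : ∀ x ∈ R, ∃ T, IsFullTrace A W (m * q) q T ∧ x ∈ T :=
    fun x hx => (mem_fullTraceSupport.1 hx).2
  obtain ⟨T₀, hT₀, hx₀T₀⟩ := hcov x₀ (hVR hx₀)
  obtain ⟨M, hM, -, hMtails⟩ := hT₀.2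
  obtain ⟨Q₀, hQ₀⟩ := card_pos.1 (by omega : 0 < M.card)
  obtain ⟨hQ₀card, hQ₀W, hQ₀A⟩ := hMtails Q₀ hQ₀
  obtain ⟨g, hg, hVg⟩ := exists_fin_cover (m := m) (R := V.erase x₀)
    (by rw [card_erase_of_mem hx₀]; omega) ⟨T₀, hT₀⟩ fun x hx => hcov x (hVR (mem_of_mem_erase hx))
  -- `V` and the tail `Q₀` are disjoint parts of the union of `k` members of `A`
  have hsub : V ∪ Q₀ ⊆ T₀ ∪ Q₀ ∪ univ.sup g := by
    intro x hx
    rcases mem_union.1 hx with hxV | hxQ₀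
    · by_cases hxx₀ : x = x₀
      · exact mem_union_left _ (mem_union_left _ (hxx₀ ▸ hx₀T₀))
      · exact mem_union_right _ (hVg (mem_erase.2 ⟨hxx₀, hxV⟩))
    · exact mem_union_left _ (mem_union_right _ hxQ₀)
  have hVQ₀ : Disjoint V Q₀ :=
    hQ₀W.symm.mono_left fun x hx => (mem_fullTraceSupport.1 (hVR hx)).1
  have hS₀W : ((T₀ ∪ Q₀) \ W).card ≤ q := by
    refine (card_le_card fun x hx => ?_).trans hQ₀card.le
    rw [mem_sdiff, mem_union] at hx
    exact hx.1.resolve_left fun h => hx.2 (hT₀.1 h)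
  have h := hA.card_union_sup_add_le hQ₀A hS₀W hg
  have := card_le_card hsub
  rw [card_union_of_disjoint hVQ₀, hV, hQ₀card] at this
  linarith

lemma KwiseUnion.card_sdiff_fullTraceSupport_le (hA : KwiseUnion (m + 1) d A)
    (hd : (m + 1) * q + r = d) (hr : r ≤ m) (hR : (fullTraceSupport A W (m * q) q).card = r)
    (hex : ∃ T, IsFullTrace A W (m * q) q T) {S : Finset α} (hS : S ∈ A)
    (hSW : (S \ W).card ≤ q) : (S \ fullTraceSupport A W (m * q) q).card ≤ q := by
  obtain ⟨g, hg, hRg⟩ := exists_fin_cover (hR.trans_le hr) hex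
    fun x hx => (mem_fullTraceSupport.1 hx).2
  have h := hA.card_union_sup_add_le hS hSW hg
  have := (card_sdiff_add_card S _).trans_le (card_le_card (union_subset_union subset_rfl hRg))
  rw [hR] at this
  linarith

lemma card_sdiff_fullTraceSupport_le_of_isFullTrace {S : Finset α}
    (hS : IsFullTrace A W N q (S ∩ W)) : (S \ fullTraceSupport A W N q).card ≤ (S \ W).card :=
  card_le_card fun x hx => by
    rw [mem_sdiff] at hx ⊢
    exact ⟨hx.1, fun hxW => hx.2 (hS.subset_fullTraceSupport (mem_inter.2 ⟨hx.1, hxW⟩))⟩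

variable [Fintype α]

lemma card_filter_card_sdiff_lt_le (hq : 0 < q) (hn : 0 < Fintype.card α) :
    (A.filter fun S => (S \ W).card < q).card
      ≤ 2 ^ W.card * (q * Fintype.card α ^ (q - 1)) := by
  refine (card_le_of_forall_card_sdiff_le (R := W) (q := q - 1) fun S hS => ?_).trans ?_
  · have := (mem_filter.1 hS).2
    omega
  · rw [Nat.sub_add_cancel hq]
    gcongr
    calc ∑ i ∈ range q, (Fintype.card α - W.card).choose i
        ≤ ∑ _i ∈ range q, Fintype.card α ^ (q - 1) := sum_le_sum fun i hi =>
          (Nat.choose_le_pow _ _).trans <| (Nat.pow_le_pow_left (Nat.sub_le _ _) i).trans <|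
            Nat.pow_le_pow_right hn (by rw [mem_range] at hi; omega)
      _ = q * Fintype.card α ^ (q - 1) := by rw [sum_const, card_range, smul_eq_mul]

lemma card_filter_inter_eq_le (hq : 0 < q) {T : Finset α} (hTW : T ⊆ W)
    (hT : ¬ IsFullTrace A W N q T) :
    (A.filter fun S => S ∩ W = T ∧ (S \ W).card = q).card ≤ N * q * Fintype.card α ^ (q - 1) := by
  set F := A.filter fun S => S ∩ W = T ∧ (S \ W).card = q
  have hrecover : ∀ S ∈ F, T ∪ S \ W = S := fun S hS => by
    rw [← (mem_filter.1 hS).2.1, union_comm, sdiff_union_inter]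
  rw [← card_image_of_injOn (f := (· \ W)) fun S hS S' hS' h => by
    rw [← hrecover S hS, ← hrecover S' hS']
    exact congrArg (T ∪ ·) h]
  refine card_le_of_forall_pairwiseDisjoint_card_le hq ?_ fun M hM hMdisj => ?_
  · simp only [mem_image]
    rintro _ ⟨S, hS, rfl⟩
    exact (mem_filter.1 hS).2.2
  · by_contra! hMN
    refine hT ⟨hTW, M, hMN, hMdisj, fun Q hQ => ?_⟩
    obtain ⟨S, hS, rfl⟩ := mem_image.1 (hM hQ)
    exact ⟨(mem_filter.1 hS).2.2, sdiff_disjoint, (hrecover S hS).symm ▸ (mem_filter.1 hS).1⟩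

open Classical in
lemma card_filter_not_isFullTrace_le (hq : 0 < q) (hn : 0 < Fintype.card α)
    (hSW : ∀ S ∈ A, (S \ W).card ≤ q) :
    (A.filter fun S => ¬ IsFullTrace A W N q (S ∩ W)).card
      ≤ 2 ^ W.card * ((1 + N) * q * Fintype.card α ^ (q - 1)) := by
  set n := Fintype.card α
  set 𝒯 := W.powerset.filter fun T => ¬ IsFullTrace A W N q T
  have hsub : A.filter (fun S => ¬ IsFullTrace A W N q (S ∩ W)) ⊆
      A.filter (fun S => (S \ W).card < q) ∪
        𝒯.biUnion fun T => A.filter fun S => S ∩ W = T ∧ (S \ W).card = q := by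
    intro S hS
    rw [mem_filter] at hS
    rcases (hSW S hS.1).lt_or_eq with hlt | heq
    · exact mem_union_left _ (mem_filter.2 ⟨hS.1, hlt⟩)
    · exact mem_union_right _ <| mem_biUnion.2 ⟨S ∩ W,
        mem_filter.2 ⟨mem_powerset.2 inter_subset_right, hS.2⟩, mem_filter.2 ⟨hS.1, rfl, heq⟩⟩
  calc _ ≤ _ := card_le_card hsub
    _ ≤ 2 ^ W.card * (q * n ^ (q - 1)) + ∑ T ∈ 𝒯, N * q * n ^ (q - 1) :=
        (card_union_le _ _).trans <| add_le_add (card_filter_card_sdiff_lt_le hq hn) <|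
          card_biUnion_le.trans <| sum_le_sum fun T hT =>
            card_filter_inter_eq_le hq (mem_powerset.1 (mem_filter.1 hT).1) (mem_filter.1 hT).2
    _ ≤ 2 ^ W.card * (q * n ^ (q - 1)) + 2 ^ W.card * (N * q * n ^ (q - 1)) := by
        rw [sum_const, smul_eq_mul, ← card_powerset W]
        gcongr
        exact filter_subset _ _
    _ = 2 ^ W.card * ((1 + N) * q * n ^ (q - 1)) := by ring

open Classical in
theorem KwiseUnion.card_le_two_pow_mul_sum_choose (hA : KwiseUnion (m + 1) d A)
    (hd : (m + 1) * q + r = d) (hr : r ≤ m) (hq : 0 < q) (hrn : r < Fintype.card α)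
    (hW : W.card ≤ d) (hSW : ∀ S ∈ A, (S \ W).card ≤ q)
    (hbig : 2 ^ d * ((1 + m * q) * q) * Fintype.card α ^ (q - 1)
      ≤ (Fintype.card α - r).choose q) :
    A.card ≤ 2 ^ r * ∑ i ∈ range (q + 1), (Fintype.card α - r).choose i := by
  set n := Fintype.card α
  set R := fullTraceSupport A W (m * q) q
  set good := A.filter fun S => IsFullTrace A W (m * q) q (S ∩ W)
  set bad := A.filter fun S => ¬ IsFullTrace A W (m * q) q (S ∩ W)
  have hA_card : A.card = good.card + bad.card := (card_filter_add_card_filter_not _).symm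
  have hbad : bad.card ≤ (n - r).choose q := by
    refine (card_filter_not_isFullTrace_le hq (by omega) hSW).trans (le_trans ?_ hbig)
    rw [← mul_assoc]
    gcongr
    norm_num
  have hgood : good.card ≤ 2 ^ R.card * ∑ i ∈ range (q + 1), (n - R.card).choose i :=
    card_le_of_forall_card_sdiff_le fun S hS =>
      (card_sdiff_fullTraceSupport_le_of_isFullTrace (mem_filter.1 hS).2).trans
        (hSW S (mem_filter.1 hS).1)
  rcases (show R.card ≤ r from hA.card_fullTraceSupport_le hd hr).lt_or_eq with hlt | heq
  · obtain ⟨s, rfl⟩ : ∃ s, r = s + 1 := ⟨r - 1, by omega⟩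
    calc A.card
        ≤ 2 ^ s * ∑ i ∈ range (q + 1), (n - (s + 1) + 1).choose i + (n - (s + 1)).choose q := by
          rw [hA_card, show n - (s + 1) + 1 = n - s by omega]
          exact add_le_add (hgood.trans (two_pow_mul_sum_choose_sub_mono q (by omega) (by omega)))
            hbad
      _ ≤ 2 ^ (s + 1) * ∑ i ∈ range (q + 1), (n - (s + 1)).choose i :=
          two_pow_mul_sum_choose_succ_add_choose_le _ _ _
  · by_cases hex : ∃ T, IsFullTrace A W (m * q) q T
    · have := card_le_of_forall_card_sdiff_le (R := R) fun S hS =>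
        hA.card_sdiff_fullTraceSupport_le hd hr heq hex hS (hSW S hS)
      rwa [heq] at this
    · have hgood_empty : good = ∅ := filter_eq_empty_iff.2 fun S _ h => hex ⟨_, h⟩
      calc A.card ≤ (n - r).choose q := by rwa [hA_card, hgood_empty, card_empty, zero_add]
        _ ≤ ∑ i ∈ range (q + 1), (n - r).choose i :=
            single_le_sum (fun _ _ => Nat.zero_le _) (self_mem_range_succ q)
        _ ≤ 2 ^ r * ∑ i ∈ range (q + 1), (n - r).choose i :=
            Nat.le_mul_of_pos_left _ (by positivity)

end

theorem statement10_general (k d : ℕ) (hk : 0 < k) :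
    ∃ n₀ : ℕ, ∀ n : ℕ, n₀ ≤ n → ∀ A : Finset (Finset (Fin n)),
      KwiseUnion k d A →
      A.card ≤ 2 ^ (d % k) * ∑ i ∈ Finset.range (d / k + 1), (n - d % k).choose i := by
  obtain ⟨m, rfl⟩ : ∃ m, k = m + 1 := ⟨k - 1, by omega⟩
  set q := d / (m + 1)
  set r := d % (m + 1)
  have hd : (m + 1) * q + r = d := Nat.div_add_mod d (m + 1)
  have hr : r ≤ m := Nat.lt_succ_iff.1 (Nat.mod_lt d hk)
  rcases Nat.eq_zero_or_pos q with hq | hq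
  · rw [hq, mul_zero, zero_add] at hd
    refine ⟨d, fun n hn A hA => ?_⟩
    obtain ⟨W, hW, hSW⟩ := hA.exists_card_le_forall_card_sdiff_le
    have := card_le_of_forall_card_sdiff_le hSW
    rw [Fintype.card_fin] at this
    exact this.trans (two_pow_mul_sum_choose_sub_mono q (by omega) (by omega))
  · obtain ⟨n₁, hn₁⟩ := exists_mul_pow_le_choose_sub (2 ^ d * ((1 + m * q) * q)) r hq
    refine ⟨n₁ + d + 1, fun n hn A hA => ?_⟩
    obtain ⟨W, hW, hSW⟩ := hA.exists_card_le_forall_card_sdiff_le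
    simpa using hA.card_le_two_pow_mul_sum_choose hd hr hq
      (by rw [Fintype.card_fin]; omega) hW hSW
      (by simpa using hn₁ n (by omega))

/-- for positive `k, d` with `r = d % k`, there is `n₀(d,k)` such that for
`n ≥ n₀` every `k`-wise `(n−d)`-union family on `[n]` has size at most
`2^r · ∑_{i=0}^{⌊d/k⌋} C(n−r, i)`. -/
theorem statement10 (k d : ℕ) (hk : 0 < k) (hd : 0 < d) :
    ∃ n₀ : ℕ, ∀ n : ℕ, n₀ ≤ n → ∀ A : Finset (Finset (Fin n)),
      KwiseUnion k d A →
      A.card ≤ 2 ^ (d % k) * ∑ i ∈ Finset.range (d / k + 1), (n - d % k).choose i :=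
  statement10_general k d hk
end
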